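/- arXiv:math/0311211 — 2 statements merged into one kernel-verified Lean document; each statement's English description precedes it below -/
import Mathlib

section
/- The generating function F_{{312,321}}(x,q,z) satisfies the identity (1 − (x+q)z + (x−1)qz²)·F_{{312,321}}(x,q,z) = 1 − qz as formal power series in x, q, z over the integers. -/
open MvPowerSeries

/-- `π` contains the pattern `σ`: there is a strictly increasing choice of indices
on which the values of `π` are in the same relative order as the values of `σ`. -/
def PermContains {n m : ℕ} (π : Equiv.Perm (Fin n)) (σ : Equiv.Perm (Fin m)) : Prop :=
  ∃ f : Fin m → Fin n, (∀ i j : Fin m, i < j → f i < f j) ∧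
    ∀ i j : Fin m, σ i < σ j ↔ π (f i) < π (f j)

/-- `π` avoids the pattern `σ`. -/
def PermAvoids {n m : ℕ} (π : Equiv.Perm (Fin n)) (σ : Equiv.Perm (Fin m)) : Prop :=
  ¬ PermContains π σ

/-- Number of fixed points of `π`. -/
noncomputable def fpCount {n : ℕ} (π : Equiv.Perm (Fin n)) : ℕ :=
  Nat.card {i : Fin n // π i = i}

/-- Number of excedances of `π`. -/
noncomputable def excCount {n : ℕ} (π : Equiv.Perm (Fin n)) : ℕ :=
  Nat.card {i : Fin n // i < π i}

/-- The pattern 123. -/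
def p123 : Equiv.Perm (Fin 3) := 1
/-- The pattern 132. -/
def p132 : Equiv.Perm (Fin 3) := Equiv.swap 1 2
/-- The pattern 213. -/
def p213 : Equiv.Perm (Fin 3) := Equiv.swap 0 1
/-- The pattern 321. -/
def p321 : Equiv.Perm (Fin 3) := Equiv.swap 0 2
/-- The pattern 231 (0 ↦ 1, 1 ↦ 2, 2 ↦ 0). -/
def p231 : Equiv.Perm (Fin 3) := Equiv.swap 0 1 * Equiv.swap 1 2
/-- The pattern 312 (0 ↦ 2, 1 ↦ 0, 2 ↦ 1). -/
def p312 : Equiv.Perm (Fin 3) := Equiv.swap 1 2 * Equiv.swap 0 1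

/-- The generating function `F_Σ(x,q,z) = Σ_{n≥0} Σ_{π ∈ S_n(Σ)} x^{fp π} q^{exc π} z^n`
as a multivariate formal power series over ℤ in variables `X 0 = x`, `X 1 = q`, `X 2 = z`:
the coefficient of `x^i q^j z^n` is the number of permutations of length `n` avoiding all
patterns of `Σ` with exactly `i` fixed points and `j` excedances. -/
noncomputable def patternGF (pats : Set (Equiv.Perm (Fin 3))) : MvPowerSeries (Fin 3) ℤ :=
  fun d => (Nat.card {π : Equiv.Perm (Fin (d 2)) //
    (∀ σ ∈ pats, PermAvoids π σ) ∧ fpCount π = d 0 ∧ excCount π = d 1} : ℤ)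

/-- The variable `x` (marking fixed points). -/
noncomputable def vx : MvPowerSeries (Fin 3) ℤ := X 0
/-- The variable `q` (marking excedances). -/
noncomputable def vq : MvPowerSeries (Fin 3) ℤ := X 1
/-- The variable `z` (marking the length). -/
noncomputable def vz : MvPowerSeries (Fin 3) ℤ := X 2

/-!
A permutation contains 312 or 321 iff some entry has two smaller entries to its right; by
counting, this happens iff `π i > i + 1` for some `i`. So the avoiders are the permutations with
`π i ≤ i + 1`, and their first entry is `0` or `1`. Removing the first entry
(`Equiv.Perm.decomposeFin`) and writing `B` for the generating function of the avoiders with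
`π 0 = 1`:
* `F = 1 + x z F + B`, since `π 0 = 0` is a fixed point prepended to an avoider;
* `B = q z² F + q z B`: if `π 1 = 0`, then `π` is `21` followed by an avoider, and otherwise
  `π 1 = 2` and removing the first entry gives an avoider with `τ 0 = 1`, losing one excedance.
Eliminating `B` gives the identity.
-/

open Equiv Finset

def IsSuccBounded {n : ℕ} (π : Perm (Fin n)) : Prop := ∀ i : Fin n, (π i : ℕ) ≤ i + 1

-- Indices are natural numbers so that one predicate applies at every length; it fails for `i ≥ n`.
def PermSends {n : ℕ} (π : Perm (Fin n)) (i j : ℕ) : Prop := ∃ h : i < n, (π ⟨i, h⟩ : ℕ) = j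

section Avoidance

variable {n : ℕ} (π : Perm (Fin n))

theorem permContains_p312_or_p321_iff :
    PermContains π p312 ∨ PermContains π p321 ↔
      ∃ i j k, i < j ∧ j < k ∧ π j < π i ∧ π k < π i := by
  constructor
  · rintro (⟨f, hf, hσ⟩ | ⟨f, hf, hσ⟩) <;>
      exact ⟨f 0, f 1, f 2, hf 0 1 (by decide), hf 1 2 (by decide),
        (hσ 1 0).1 (by decide), (hσ 2 0).1 (by decide)⟩
  · rintro ⟨i, j, k, hij, hjk, hji, hki⟩
    have hmono : StrictMono ![i, j, k] := by
      simp [Fin.strictMono_iff_lt_succ, Fin.forall_fin_two, hij, hjk]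
    rcases lt_or_gt_of_ne (π.injective.ne hjk.ne) with hjk' | hkj
    · refine .inl ⟨![i, j, k], fun _ _ h => hmono h, fun u v => ?_⟩
      fin_cases u <;> fin_cases v <;> simp [p312, swap_apply_def] <;> order
    · refine .inr ⟨![i, j, k], fun _ _ h => hmono h, fun u v => ?_⟩
      fin_cases u <;> fin_cases v <;> simp [p321, swap_apply_def] <;> order

theorem exists_two_smaller_after_of_succ_lt {i : Fin n} (hi : (i : ℕ) + 1 < π i) :
    ∃ j k, i < j ∧ j < k ∧ π j < π i ∧ π k < π i := by
  have hsmaller : #{j | π j < π i} = π i := by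
    rw [← Fin.card_Iio (π i), ← card_map π.toEmbedding]
    congr 1
    ext j
    simp
  have hcover : ({j | π j < π i} : Finset _) ⊆ Iio i ∪ ({j | i < j ∧ π j < π i} : Finset _) := by
    intro j hj
    simp only [mem_filter, mem_univ, true_and] at hj
    rcases lt_trichotomy j i with h | rfl | h
    · simp [h]
    · exact absurd hj (lt_irrefl _)
    · simp [h, hj]
  have htwo : 1 < #({j | i < j ∧ π j < π i} : Finset _) := by
    have := (card_le_card hcover).trans (card_union_le _ _)
    rw [hsmaller, Fin.card_Iio] at this
    omega
  obtain ⟨j, hj, k, hk, hjk⟩ := one_lt_card.1 htwo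
  simp only [mem_filter, mem_univ, true_and] at hj hk
  rcases lt_or_gt_of_ne hjk with h | h
  · exact ⟨j, k, hj.1, h, hj.2, hk.2⟩
  · exact ⟨k, j, hk.1, h, hk.2, hj.2⟩

theorem IsSuccBounded.not_two_smaller_after {π : Perm (Fin n)} (hπ : IsSuccBounded π)
    {i j k : Fin n} (hij : i < j) (hjk : j < k) (hji : π j < π i) (hki : π k < π i) : False := by
  have hcard : #(insert j (insert k (Iic i))) = i + 3 := by
    rw [card_insert_of_notMem, card_insert_of_notMem, Fin.card_Iic]
    · simpa using hij.trans hjk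
    · simp [hjk.ne, hij]
  have hmaps : ∀ x ∈ insert j (insert k (Iic i)), (π x : ℕ) ∈ range (i + 2) := by
    have := hπ i
    simp only [mem_insert, mem_Iic, mem_range, forall_eq_or_imp]
    refine ⟨by simp only [Fin.lt_def] at hji; omega, by simp only [Fin.lt_def] at hki; omega,
      fun x hx => ?_⟩
    have := hπ x
    rw [Fin.le_def] at hx
    omega
  have := card_le_card_of_injOn _ hmaps fun x _ y _ h => π.injective (Fin.ext h)
  rw [hcard, card_range] at this
  omega

theorem avoids_p312_p321_iff :
    (∀ σ ∈ ({p312, p321} : Set (Perm (Fin 3))), PermAvoids π σ) ↔ IsSuccBounded π := by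
  simp only [Set.mem_insert_iff, Set.mem_singleton_iff, forall_eq_or_imp, forall_eq,
    PermAvoids, ← not_or, permContains_p312_or_p321_iff]
  constructor
  · intro h i
    by_contra! hi
    exact h ⟨i, exists_two_smaller_after_of_succ_lt π hi⟩
  · rintro hπ ⟨i, j, k, hij, hjk, hji, hki⟩
    exact hπ.not_two_smaller_after hij hjk hji hki

end Avoidance

section Statistics

variable {n : ℕ}

theorem IsSuccBounded.val_apply_zero_le_one {π : Perm (Fin (n + 1))} (h : IsSuccBounded π) :
    (π 0 : ℕ) ≤ 1 :=
  h 0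

theorem permSends_zero_iff (π : Perm (Fin (n + 1))) (j : ℕ) :
    PermSends π 0 j ↔ (π 0 : ℕ) = j := by
  simp [PermSends]

theorem permSends_one_iff (π : Perm (Fin (n + 2))) (j : ℕ) :
    PermSends π 1 j ↔ (π 1 : ℕ) = j := by
  simp [PermSends]

theorem PermSends.one_le_fpCount {π : Perm (Fin n)} {i : ℕ} (h : PermSends π i i) :
    1 ≤ fpCount π := by
  obtain ⟨hi, hπ⟩ := h
  exact Nat.card_pos_iff.2 ⟨⟨⟨⟨i, hi⟩, Fin.ext hπ⟩⟩, inferInstance⟩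

theorem PermSends.one_le_excCount {π : Perm (Fin n)} {i j : ℕ} (h : PermSends π i j)
    (hij : i < j) : 1 ≤ excCount π := by
  obtain ⟨hi, hπ⟩ := h
  exact Nat.card_pos_iff.2 ⟨⟨⟨⟨i, hi⟩, by rw [Fin.lt_def, hπ]; exact hij⟩⟩, inferInstance⟩

theorem fpCount_eq_sum (π : Perm (Fin n)) :
    fpCount π = ∑ i, if (π i : ℕ) = i then 1 else 0 := by
  classical
  simp only [fpCount, Nat.card_eq_fintype_card, Fintype.card_subtype, card_filter, Fin.ext_iff]

theorem excCount_eq_sum (π : Perm (Fin n)) :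
    excCount π = ∑ i : Fin n, if (i : ℕ) < π i then 1 else 0 := by
  classical
  simp only [excCount, Nat.card_eq_fintype_card, Fintype.card_subtype, card_filter, Fin.lt_def]

end Statistics

namespace Equiv.Perm

theorem decomposeFin_fst {n : ℕ} (π : Perm (Fin (n + 1))) : (decomposeFin π).1 = π 0 := by
  rw [← decomposeFin_symm_apply_zero (decomposeFin π).1 (decomposeFin π).2, Prod.mk.eta,
    Equiv.symm_apply_apply]

theorem card_subtype_decomposeFin {n : ℕ} (p : Fin (n + 1)) {R : Perm (Fin (n + 1)) → Prop}
    (hR : ∀ π, R π → π 0 = p) :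
    Nat.card {π // R π} = Nat.card {τ : Perm (Fin n) // R (decomposeFin.symm (p, τ))} := by
  have hinv : ∀ π, R π → decomposeFin.symm (p, (decomposeFin π).2) = π := fun π hπ => by
    rw [← hR π hπ, ← decomposeFin_fst, Prod.mk.eta, Equiv.symm_apply_apply]
  exact Nat.card_congr
    { toFun := fun π => ⟨(decomposeFin π.1).2, by rw [hinv π π.2]; exact π.2⟩
      invFun := fun τ => ⟨decomposeFin.symm (p, τ), τ.2⟩
      left_inv := fun π => Subtype.ext (hinv π π.2)
      right_inv := fun τ => by simp }

section PrependFixedPoint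

variable {n : ℕ} (τ : Perm (Fin n))

theorem fpCount_decomposeFin_symm_zero :
    fpCount (decomposeFin.symm (0, τ)) = fpCount τ + 1 := by
  rw [fpCount_eq_sum, fpCount_eq_sum, Fin.sum_univ_succ, add_comm]
  simp

theorem excCount_decomposeFin_symm_zero : excCount (decomposeFin.symm (0, τ)) = excCount τ := by
  rw [excCount_eq_sum, excCount_eq_sum, Fin.sum_univ_succ]
  simp

theorem isSuccBounded_decomposeFin_symm_zero :
    IsSuccBounded (decomposeFin.symm (0, τ)) ↔ IsSuccBounded τ := by
  simp [IsSuccBounded, Fin.forall_fin_succ]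

end PrependFixedPoint

section PrependOne

variable {n : ℕ} (τ : Perm (Fin (n + 1)))

theorem val_decomposeFin_symm_one_succ (i : Fin (n + 1)) :
    (decomposeFin.symm (1, τ) i.succ : ℕ) = if (τ i : ℕ) = 0 then 0 else (τ i : ℕ) + 1 := by
  rw [decomposeFin_symm_apply_succ]
  by_cases h : (τ i : ℕ) = 0
  · simp [Fin.val_eq_zero_iff.1 h]
  · have hne : (τ i).succ ≠ 1 := fun h1 => h (by
      rw [← Fin.succ_zero_eq_one, Fin.succ_inj] at h1
      simp [h1])
    simp [h, swap_apply_of_ne_of_ne (Fin.succ_ne_zero _) hne]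

theorem permSends_decomposeFin_symm_one_one_zero :
    PermSends (decomposeFin.symm (1, τ)) 1 0 ↔ (τ 0 : ℕ) = 0 := by
  have h1 := val_decomposeFin_symm_one_succ τ 0
  rw [Fin.succ_zero_eq_one] at h1
  rw [permSends_one_iff, h1]
  split_ifs <;> simp_all

theorem fpCount_decomposeFin_symm_one :
    fpCount (decomposeFin.symm (1, τ)) + (if (τ 0 : ℕ) = 0 then 1 else 0) = fpCount τ := by
  rw [fpCount_eq_sum, fpCount_eq_sum, Fin.sum_univ_succ, Fin.sum_univ_succ, Fin.sum_univ_succ]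
  simp only [decomposeFin_symm_apply_zero, val_decomposeFin_symm_one_succ, Fin.val_succ,
    Fin.val_zero, Fin.val_one]
  have hterm : ∀ x : Fin n, (if (if (τ x.succ : ℕ) = 0 then 0 else (τ x.succ : ℕ) + 1) = x + 1 + 1
      then 1 else 0) = if (τ x.succ : ℕ) = x + 1 then 1 else 0 := fun x => by
    split_ifs <;> omega
  rw [sum_congr rfl fun x _ => hterm x]
  by_cases h : (τ 0 : ℕ) = 0 <;> simp [h, add_comm]

theorem excCount_decomposeFin_symm_one :
    excCount (decomposeFin.symm (1, τ)) = excCount τ + 1 := by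
  rw [excCount_eq_sum, excCount_eq_sum, Fin.sum_univ_succ]
  simp only [decomposeFin_symm_apply_zero, val_decomposeFin_symm_one_succ, Fin.val_succ,
    Fin.val_zero, Fin.val_one, if_pos Nat.zero_lt_one]
  rw [add_comm]
  congr 1
  refine sum_congr rfl fun i _ => ?_
  split_ifs <;> omega

theorem isSuccBounded_decomposeFin_symm_one :
    IsSuccBounded (decomposeFin.symm (1, τ)) ↔ IsSuccBounded τ := by
  simp only [IsSuccBounded, Fin.forall_fin_succ (n := n + 1), decomposeFin_symm_apply_zero,
    val_decomposeFin_symm_one_succ, Fin.val_zero, Fin.val_succ, Fin.val_one]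
  refine ⟨fun h i => ?_, fun h => ⟨le_rfl, fun i => ?_⟩⟩
  · have := h.2 i
    split_ifs at this <;> omega
  · have := h i
    split_ifs <;> omega

end PrependOne

end Equiv.Perm

section GeneratingFunction

variable (P Q R : ∀ n, Perm (Fin n) → Prop)

noncomputable def permCount (a b n : ℕ) : ℕ :=
  Nat.card {π : Perm (Fin n) // P n π ∧ fpCount π = a ∧ excCount π = b}

noncomputable def permGF : MvPowerSeries (Fin 3) ℤ :=
  fun d => permCount P (d 0) (d 1) (d 2)

theorem coeff_permGF (d : Fin 3 →₀ ℕ) :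
    coeff d (permGF P) = permCount P (d 0) (d 1) (d 2) :=
  rfl

theorem patternGF_eq_permGF (pats : Set (Perm (Fin 3))) :
    patternGF pats = permGF fun _ π => ∀ σ ∈ pats, PermAvoids π σ :=
  rfl

variable {P Q R}

theorem permGF_congr (h : ∀ n π, P n π ↔ Q n π) : permGF P = permGF Q :=
  congrArg permGF (funext₂ fun n π => propext (h n π))

theorem permGF_eq_add (h : ∀ n π, P n π ↔ Q n π ∨ R n π) (hQR : ∀ n π, Q n π → ¬ R n π) :
    permGF P = permGF Q + permGF R := by
  classical
  ext d
  simp only [map_add, coeff_permGF, permCount, ← Nat.cast_add, ← Nat.card_sum]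
  congr 1
  refine Nat.card_congr ((subtypeEquivRight fun π => ?_).trans
    (subtypeOrEquiv _ _ (le_compl_iff_disjoint_right.mp fun π hQ hR => hQR _ π hQ.1 hR.1)))
  rw [h]
  tauto

theorem permCount_length_eq_zero (a b n : ℕ) :
    permCount (fun n _ => n = 0) a b n = if a = 0 ∧ b = 0 ∧ n = 0 then 1 else 0 := by
  cases n with
  | zero =>
    simp only [permCount, fpCount, excCount, Nat.card_of_isEmpty, true_and, and_true,
      eq_comm (a := 0)]
    split_ifs with h
    · simp [h]
    · exact Nat.card_eq_zero.2 (.inl ⟨fun π => h π.2⟩)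
  | succ n => simp [permCount]

theorem permGF_length_eq_zero : permGF (fun n _ => n = 0) = 1 := by
  ext d
  rw [coeff_permGF, permCount_length_eq_zero, coeff_one]
  simp [Finsupp.ext_iff, Fin.forall_fin_succ]

theorem permGF_eq_mul_of_permCount {i j k : ℕ}
    (hQ : ∀ n π, Q n π → k ≤ n ∧ i ≤ fpCount π ∧ j ≤ excCount π)
    (h : ∀ a b n, permCount Q (a + i) (b + j) (n + k) = permCount P a b n) :
    permGF Q = vx ^ i * vq ^ j * vz ^ k * permGF P := by
  set e : Fin 3 →₀ ℕ := Finsupp.single 0 i + Finsupp.single 1 j + Finsupp.single 2 k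
  have hmon : vx ^ i * vq ^ j * vz ^ k = monomial e 1 := by
    simp [e, vx, vq, vz, X_pow_eq, monomial_mul_monomial]
  have he : e 0 = i ∧ e 1 = j ∧ e 2 = k := by simp [e]
  have hle_iff (d : Fin 3 →₀ ℕ) : e ≤ d ↔ i ≤ d 0 ∧ j ≤ d 1 ∧ k ≤ d 2 := by
    simp [e, Finsupp.le_def, Fin.forall_fin_succ]
  ext d
  rw [hmon, coeff_monomial_mul, coeff_permGF, coeff_permGF]
  split_ifs with hle
  · obtain ⟨hi, hj, hk⟩ := (hle_iff d).1 hle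
    simp only [Finsupp.tsub_apply, he, one_mul, Nat.cast_inj]
    rw [← h, Nat.sub_add_cancel hi, Nat.sub_add_cancel hj, Nat.sub_add_cancel hk]
  · refine Nat.cast_eq_zero.2 (Nat.card_eq_zero.2 (.inl ⟨fun ⟨π, hπ, hfp, hexc⟩ => ?_⟩))
    have := hQ _ π hπ
    exact hle ((hle_iff d).2 (by omega))

end GeneratingFunction

open Equiv.Perm

theorem permCount_sends_zero_zero (a b n : ℕ) :
    permCount (fun _ π => IsSuccBounded π ∧ PermSends π 0 0) (a + 1) b (n + 1) =
      permCount (fun _ π => IsSuccBounded π) a b n := by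
  rw [permCount, card_subtype_decomposeFin 0 fun π h =>
    Fin.val_eq_zero_iff.1 ((permSends_zero_iff π 0).1 h.1.2)]
  refine Nat.card_congr (subtypeEquivRight fun τ => ?_)
  simp [isSuccBounded_decomposeFin_symm_zero, fpCount_decomposeFin_symm_zero,
    excCount_decomposeFin_symm_zero, permSends_zero_iff]

theorem permCount_sends_zero_one_sends_one_zero (a b n : ℕ) :
    permCount (fun _ π => IsSuccBounded π ∧ PermSends π 0 1 ∧ PermSends π 1 0) a (b + 1)
        (n + 2) =
      permCount (fun _ π => IsSuccBounded π ∧ PermSends π 0 0) (a + 1) b (n + 1) := by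
  rw [permCount, card_subtype_decomposeFin 1 fun π h =>
    Fin.ext (((permSends_zero_iff π 1).1 h.1.2.1).trans (Fin.val_one _).symm)]
  refine Nat.card_congr (subtypeEquivRight fun τ => ?_)
  have hfp := fpCount_decomposeFin_symm_one τ
  simp only [isSuccBounded_decomposeFin_symm_one, excCount_decomposeFin_symm_one,
    permSends_decomposeFin_symm_one_one_zero, permSends_zero_iff, decomposeFin_symm_apply_zero,
    Fin.val_one]
  by_cases h : (τ 0 : ℕ) = 0
  · simp only [h, if_true, and_true, Nat.add_right_cancel_iff] at hfp ⊢
    rw [← hfp, Nat.add_right_cancel_iff]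
  · simp [h]

theorem permCount_sends_zero_one_not_sends_one_zero (a b n : ℕ) :
    permCount (fun _ π => IsSuccBounded π ∧ PermSends π 0 1 ∧ ¬ PermSends π 1 0) a (b + 1)
        (n + 1) =
      permCount (fun _ π => IsSuccBounded π ∧ PermSends π 0 1) a b n := by
  cases n with
  | zero =>
    rw [permCount, permCount, Nat.card_eq_zero.2 (.inl ⟨fun π => ?_⟩),
      Nat.card_eq_zero.2 (.inl ⟨fun π => ?_⟩)]
    · exact Nat.lt_irrefl 0 π.2.1.2.1
    · obtain ⟨h0, h1⟩ := π.2.1.2.1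
      have := (π.1 ⟨0, h0⟩).isLt
      omega
  | succ n =>
    rw [permCount, card_subtype_decomposeFin 1 fun π h =>
      Fin.ext (((permSends_zero_iff π 1).1 h.1.2.1).trans (Fin.val_one _).symm)]
    refine Nat.card_congr (subtypeEquivRight fun τ => ?_)
    have hfp := fpCount_decomposeFin_symm_one τ
    simp only [isSuccBounded_decomposeFin_symm_one, excCount_decomposeFin_symm_one,
      permSends_decomposeFin_symm_one_one_zero, permSends_zero_iff, decomposeFin_symm_apply_zero,
      Fin.val_one]
    by_cases h : (τ 0 : ℕ) = 0
    · simp [h]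
    · have hτ (hb : IsSuccBounded τ) : (τ 0 : ℕ) = 1 := by
        have := hb.val_apply_zero_le_one
        omega
      simp only [h, if_false, add_zero, not_false_eq_true, and_true, Nat.add_right_cancel_iff]
        at hfp ⊢
      rw [hfp]
      tauto

theorem permGF_sends_zero_zero :
    permGF (fun _ π => IsSuccBounded π ∧ PermSends π 0 0) =
      vx * vz * permGF fun _ π => IsSuccBounded π := by
  simpa using permGF_eq_mul_of_permCount (i := 1) (j := 0) (k := 1)
    (fun _ π h => ⟨h.2.1, h.2.one_le_fpCount, Nat.zero_le _⟩) permCount_sends_zero_zero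

theorem permGF_sends_zero_one :
    permGF (fun _ π => IsSuccBounded π ∧ PermSends π 0 1) =
      vq * vz ^ 2 * (permGF fun _ π => IsSuccBounded π) +
        vq * vz * permGF (fun _ π => IsSuccBounded π ∧ PermSends π 0 1) := by
  have hsplit := permGF_eq_add
    (P := fun _ π => IsSuccBounded π ∧ PermSends π 0 1)
    (Q := fun _ π => IsSuccBounded π ∧ PermSends π 0 1 ∧ PermSends π 1 0)
    (R := fun _ π => IsSuccBounded π ∧ PermSends π 0 1 ∧ ¬ PermSends π 1 0)
    (fun _ _ => by tauto) (fun _ _ => by tauto)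
  conv_lhs => rw [hsplit]
  rw [permGF_eq_mul_of_permCount (i := 0) (j := 1) (k := 2)
      (fun _ π h => ⟨h.2.2.1, Nat.zero_le _, h.2.1.one_le_excCount one_pos⟩)
      (fun a b n => (permCount_sends_zero_one_sends_one_zero a b n).trans
        (permCount_sends_zero_zero a b n)),
    permGF_eq_mul_of_permCount (i := 0) (j := 1) (k := 1)
      (fun _ π h => ⟨h.2.1.1, Nat.zero_le _, h.2.1.one_le_excCount one_pos⟩)
      permCount_sends_zero_one_not_sends_one_zero]
  simp

theorem permGF_isSuccBounded :
    permGF (fun _ π => IsSuccBounded π) =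
      1 + vx * vz * permGF (fun _ π => IsSuccBounded π) +
        permGF (fun _ π => IsSuccBounded π ∧ PermSends π 0 1) := by
  rw [← permGF_sends_zero_zero, ← permGF_length_eq_zero,
    ← permGF_eq_add (fun _ _ => Iff.rfl) ?_, ← permGF_eq_add ?_ ?_]
  · rintro (_ | n) π
    · simp [IsSuccBounded]
    · simp only [permSends_zero_iff]
      constructor
      · intro hb
        rcases Nat.le_one_iff_eq_zero_or_eq_one.1 hb.val_apply_zero_le_one with h | h
        · exact .inl (.inr ⟨hb, h⟩)
        · exact .inr ⟨hb, h⟩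
      · rintro ((h | ⟨hb, -⟩) | ⟨hb, -⟩)
        exacts [absurd h n.succ_ne_zero, hb, hb]
  · rintro n π (rfl | ⟨-, h0, h⟩) ⟨-, h0', h'⟩
    exacts [Nat.lt_irrefl 0 h0', zero_ne_one (h.symm.trans h')]
  · rintro n π rfl ⟨-, h0, -⟩
    exact Nat.lt_irrefl 0 h0

/-- (1 − (x+q)z + (x−1)qz²)·F_{{312,321}}(x,q,z) = 1 − qz. -/
theorem F312_321_identity :
    (1 - (vx + vq) * vz + (vx - 1) * vq * vz ^ 2) * patternGF {p312, p321} =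
      1 - vq * vz := by
  rw [patternGF_eq_permGF, permGF_congr fun _ => avoids_p312_p321_iff]
  linear_combination (1 - vq * vz) * permGF_isSuccBounded + permGF_sends_zero_one
end

section
/- The generating function F_{{132,321}}(x,q,z) equals F_{{213,321}}(x,q,z), and it satisfies the identity (1−z)(1−xz)(1−qz)·F_{{132,321}}(x,q,z) = 1 − (1+q)z + 2qz² as formal power series in x, q, z over the integers. -/
/-
The map `π ↦ rev ∘ π⁻¹ ∘ rev` (reverse-complement of the inverse) is an involution that preserves
fixed points and excedances, sends the pattern 132 to 213 and fixes 321; this gives the first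
identity.

If `π` avoids 132 and 321 and `a = π⁻¹ 0`, then `π` is increasing on `[0, a)` (by 321) and on
`[a, n)` (by 132), and every later value above `π 0` exceeds all values of the first run. Counting
the entries smaller than each `π k` then shows that `π` exchanges the blocks `[0, a)` and
`[a, a + π 0)`. Such a block swap with `a, b ≥ 1` has `a` excedances and `n - a - b` fixed points,
so `F = Σ (xz)ⁿ + qz² / ((1 - z)(1 - xz)(1 - qz))`, which is the second identity.
-/

open MvPowerSeries

open Equiv Finset

namespace PermContains

variable {n m : ℕ} {π : Perm (Fin n)} {σ : Perm (Fin m)}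

theorem inv (h : PermContains π σ) : PermContains π⁻¹ σ⁻¹ := by
  obtain ⟨f, hf, hord⟩ := h
  have hf' : StrictMono f := fun i j hij => hf i j hij
  refine ⟨fun k => π (f (σ⁻¹ k)), fun k l hkl => ?_, fun k l => ?_⟩
  · simpa using (hord (σ⁻¹ k) (σ⁻¹ l)).mp (by simpa using hkl)
  · simp [hf'.lt_iff_lt]

theorem conj_rev (h : PermContains π σ) :
    PermContains (Fin.revPerm * π * Fin.revPerm) (Fin.revPerm * σ * Fin.revPerm) := by
  obtain ⟨f, hf, hord⟩ := h
  refine ⟨fun i => Fin.rev (f (Fin.rev i)), fun i j hij => ?_, fun i j => ?_⟩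
  · exact Fin.rev_lt_rev.mpr (hf _ _ (Fin.rev_lt_rev.mpr hij))
  · simpa using hord (Fin.rev j) (Fin.rev i)

end PermContains

section RevInv

variable {n m : ℕ} {π : Perm (Fin n)} {σ : Perm (Fin m)}

def revInv (π : Perm (Fin n)) : Perm (Fin n) := Fin.revPerm * π⁻¹ * Fin.revPerm

theorem revInv_revInv (π : Perm (Fin n)) : revInv (revInv π) = π := by
  ext i; simp [revInv]

theorem PermContains.revInv (h : PermContains π σ) : PermContains (revInv π) (revInv σ) :=
  h.inv.conj_rev

theorem permContains_revInv_iff :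
    PermContains (revInv π) σ ↔ PermContains π (revInv σ) :=
  ⟨fun h => by simpa only [revInv_revInv] using h.revInv,
    fun h => by simpa only [revInv_revInv] using h.revInv⟩

theorem fpCount_revInv (π : Perm (Fin n)) : fpCount (revInv π) = fpCount π :=
  Nat.card_congr <| subtypeEquiv Fin.revPerm fun i => by
    rw [revInv, Perm.mul_apply, Perm.mul_apply, Fin.revPerm_apply, Fin.revPerm_apply,
      Fin.rev_eq_iff, Perm.inv_eq_iff_eq, eq_comm]

theorem excCount_revInv (π : Perm (Fin n)) : excCount (revInv π) = excCount π :=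
  Nat.card_congr <| subtypeEquiv (Fin.revPerm.trans π⁻¹) fun i => by
    simp [revInv, Fin.lt_rev_iff]

end RevInv

theorem patternGF_image_revInv (pats : Set (Perm (Fin 3))) :
    patternGF (revInv '' pats) = patternGF pats := by
  ext d
  simp only [MvPowerSeries.coeff_apply, patternGF]
  congr 1
  refine Nat.card_congr <| subtypeEquiv ⟨revInv, revInv, revInv_revInv, revInv_revInv⟩
    fun π => ?_
  simp [PermAvoids, fpCount_revInv, excCount_revInv, permContains_revInv_iff]

theorem revInv_p132 : revInv p132 = p213 := by decide

theorem revInv_p321 : revInv p321 = p321 := by decide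

theorem patternGF_132_321_eq_213_321 : patternGF {p132, p321} = patternGF {p213, p321} := by
  rw [← patternGF_image_revInv, Set.image_pair, revInv_p132, revInv_p321]

theorem permContains_p132_iff {n : ℕ} (π : Perm (Fin n)) :
    PermContains π p132 ↔ ∃ i j k, i < j ∧ j < k ∧ π i < π k ∧ π k < π j := by
  constructor
  · rintro ⟨f, hmono, hord⟩
    exact ⟨f 0, f 1, f 2, hmono 0 1 (by decide), hmono 1 2 (by decide),
      (hord 0 2).mp (by decide), (hord 2 1).mp (by decide)⟩
  · rintro ⟨i, j, k, hij, hjk, h1, h2⟩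
    refine ⟨![i, j, k], fun s t hst => ?_, fun s t => ?_⟩
    · fin_cases s <;> fin_cases t <;> simp_all [hij.trans hjk]
    · fin_cases s <;> fin_cases t <;> simp [p132, swap_apply_of_ne_of_ne] <;> omega

theorem permContains_p321_iff {n : ℕ} (π : Perm (Fin n)) :
    PermContains π p321 ↔ ∃ i j k, i < j ∧ j < k ∧ π k < π j ∧ π j < π i := by
  constructor
  · rintro ⟨f, hmono, hord⟩
    exact ⟨f 0, f 1, f 2, hmono 0 1 (by decide), hmono 1 2 (by decide),
      (hord 2 1).mp (by decide), (hord 1 0).mp (by decide)⟩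
  · rintro ⟨i, j, k, hij, hjk, h1, h2⟩
    refine ⟨![i, j, k], fun s t hst => ?_, fun s t => ?_⟩
    · fin_cases s <;> fin_cases t <;> simp_all [hij.trans hjk]
    · fin_cases s <;> fin_cases t <;> simp [p321, swap_apply_of_ne_of_ne] <;> omega

def blockSwapFun (a b i : ℕ) : ℕ := if i < a then i + b else if i < a + b then i - a else i

theorem blockSwapFun_lt {a b n i : ℕ} (h : a + b ≤ n) (hi : i < n) : blockSwapFun a b i < n := by
  unfold blockSwapFun; split_ifs <;> omega

theorem blockSwapFun_blockSwapFun (a b i : ℕ) : blockSwapFun b a (blockSwapFun a b i) = i := by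
  unfold blockSwapFun; split_ifs <;> omega

/-- In one-line notation `b, b+1, …, a+b-1, 0, 1, …, b-1, a+b, …, n-1`. -/
def blockSwap (n a b : ℕ) (h : a + b ≤ n) : Perm (Fin n) where
  toFun i := ⟨blockSwapFun a b i, blockSwapFun_lt h i.isLt⟩
  invFun i := ⟨blockSwapFun b a i, blockSwapFun_lt (by omega) i.isLt⟩
  left_inv i := Fin.ext (blockSwapFun_blockSwapFun a b i)
  right_inv i := Fin.ext (blockSwapFun_blockSwapFun b a i)

section BlockSwap

variable {n a b : ℕ} (h : a + b ≤ n)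

@[simp]
theorem val_blockSwap_apply (i : Fin n) : (blockSwap n a b h i : ℕ) = blockSwapFun a b i := rfl

theorem blockSwap_avoids_p132 : PermAvoids (blockSwap n a b h) p132 := by
  rw [PermAvoids, permContains_p132_iff]
  rintro ⟨i, j, k, hij, hjk, h1, h2⟩
  simp only [Fin.lt_def, val_blockSwap_apply, blockSwapFun] at hij hjk h1 h2
  split_ifs at h1 h2 <;> omega

theorem blockSwap_avoids_p321 : PermAvoids (blockSwap n a b h) p321 := by
  rw [PermAvoids, permContains_p321_iff]
  rintro ⟨i, j, k, hij, hjk, h1, h2⟩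
  simp only [Fin.lt_def, val_blockSwap_apply, blockSwapFun] at hij hjk h1 h2
  split_ifs at h1 h2 <;> omega

theorem fpCount_blockSwap (hab : a = 0 ↔ b = 0) : fpCount (blockSwap n a b h) = n - (a + b) := by
  have key (i : Fin n) : blockSwap n a b h i = i ↔ ¬ (i : ℕ) < a + b := by
    rw [Fin.ext_iff, val_blockSwap_apply, blockSwapFun]
    split_ifs <;> omega
  rw [fpCount, Nat.card_congr (subtypeEquivRight key), Nat.card_eq_fintype_card,
    Fintype.card_subtype_compl, Fintype.card_subtype, Fin.card_filter_val_lt, Fintype.card_fin]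
  omega

theorem excCount_blockSwap (hb : a ≠ 0 → b ≠ 0) : excCount (blockSwap n a b h) = a := by
  have key (i : Fin n) : i < blockSwap n a b h i ↔ (i : ℕ) < a := by
    rw [Fin.lt_def, val_blockSwap_apply, blockSwapFun]
    split_ifs <;> omega
  rw [excCount, Nat.card_congr (subtypeEquivRight key), Nat.card_eq_fintype_card,
    Fintype.card_subtype, Fin.card_filter_val_lt]
  omega

end BlockSwap

theorem card_filter_apply_lt {n : ℕ} (π : Perm (Fin n)) (v : Fin n) : #{j | π j < v} = v := by
  rw [← Fin.card_Iio v]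
  exact card_equiv π (by simp)

section Classification

variable {n : ℕ} [NeZero n] {π : Perm (Fin n)} {i j k : Fin n}

theorem apply_lt_apply_of_lt_symm_zero (h321 : PermAvoids π p321) (hij : i < j)
    (hj : j < π⁻¹ 0) : π i < π j := by
  by_contra hji
  refine h321 ((permContains_p321_iff π).mpr ⟨i, j, π⁻¹ 0, hij, hj, ?_, ?_⟩)
  · simpa [Fin.pos_iff_ne_zero, ← Perm.eq_inv_iff_eq] using hj.ne
  · exact lt_of_le_of_ne (not_lt.mp hji) (π.injective.ne hij.ne')

theorem apply_lt_apply_of_symm_zero_le (h132 : PermAvoids π p132) (hi : π⁻¹ 0 ≤ i)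
    (hij : i < j) : π i < π j := by
  have hj : π j ≠ 0 := by simpa [← Perm.eq_inv_iff_eq] using (hi.trans_lt hij).ne'
  rcases hi.eq_or_lt with rfl | hi
  · simpa [Fin.pos_iff_ne_zero] using hj
  by_contra hji
  refine h132 ((permContains_p132_iff π).mpr ⟨π⁻¹ 0, i, j, hi, hij, ?_, ?_⟩)
  · simpa [Fin.pos_iff_ne_zero] using hj
  · exact lt_of_le_of_ne (not_lt.mp hji) (π.injective.ne hij.ne')

theorem symm_zero_le_of_apply_lt_apply_zero (h321 : PermAvoids π p321) (hk : π k < π 0) :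
    π⁻¹ 0 ≤ k := by
  by_contra! hka
  rcases (Fin.zero_le k).eq_or_lt with rfl | hk0
  · exact hk.false
  · exact (apply_lt_apply_of_lt_symm_zero h321 hk0 hka).not_gt hk

theorem apply_lt_apply_of_lt_symm_zero_le (h132 : PermAvoids π p132) (hi : i < π⁻¹ 0)
    (hk : π⁻¹ 0 ≤ k) (hbk : π 0 ≤ π k) : π i < π k := by
  have hk0 : 0 < k := (Fin.zero_le i).trans_lt (hi.trans_le hk)
  have h0k : π 0 < π k := lt_of_le_of_ne hbk (π.injective.ne hk0.ne)
  rcases (Fin.zero_le i).eq_or_lt with rfl | hi0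
  · exact h0k
  by_contra hki
  refine h132 ((permContains_p132_iff π).mpr ⟨0, i, k, hi0, hi.trans_le hk, h0k, ?_⟩)
  exact lt_of_le_of_ne (not_lt.mp hki) (π.injective.ne (hi.trans_le hk).ne')

theorem apply_zero_le_of_lt_symm_zero (h321 : PermAvoids π p321) (hi : i < π⁻¹ 0) :
    π 0 ≤ π i := by
  rcases (Fin.zero_le i).eq_or_lt with rfl | hi0
  · exact le_rfl
  · exact (apply_lt_apply_of_lt_symm_zero h321 hi0 hi).le

theorem val_apply_of_lt_symm_zero (h132 : PermAvoids π p132) (h321 : PermAvoids π p321)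
    (hi : i < π⁻¹ 0) : (π i : ℕ) = i + π 0 := by
  have hset : ({j | π j < π i} : Finset (Fin n)) = Iio i ∪ ({j | π j < π 0} : Finset (Fin n)) := by
    ext j
    simp only [mem_filter, mem_univ, true_and, mem_union, mem_Iio]
    constructor
    · intro hj
      by_contra! hij
      rcases lt_or_ge j (π⁻¹ 0) with hja | hja
      · rcases hij.1.eq_or_lt with rfl | hij'
        · exact hj.false
        · exact (apply_lt_apply_of_lt_symm_zero h321 hij' hja).not_gt hj
      · exact (apply_lt_apply_of_lt_symm_zero_le h132 hi hja hij.2).not_gt hj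
    · rintro (hji | hj0)
      · exact apply_lt_apply_of_lt_symm_zero h321 hji hi
      · exact hj0.trans_le (apply_zero_le_of_lt_symm_zero h321 hi)
  have hdisj : Disjoint (Iio i) ({j | π j < π 0} : Finset (Fin n)) :=
    disjoint_left.mpr fun j hji hj0 =>
      (apply_zero_le_of_lt_symm_zero h321 ((mem_Iio.mp hji).trans hi)).not_gt (mem_filter.mp hj0).2
  rw [← card_filter_apply_lt π (π i), hset, card_union_of_disjoint hdisj, Fin.card_Iio,
    card_filter_apply_lt]

theorem val_apply_of_symm_zero_le_of_apply_lt (h132 : PermAvoids π p132)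
    (h321 : PermAvoids π p321) (hk : π⁻¹ 0 ≤ k) (hk0 : π k < π 0) :
    (π k : ℕ) = k - π⁻¹ 0 := by
  have hset : ({j | π j < π k} : Finset (Fin n)) = Ico (π⁻¹ 0) k := by
    ext j
    simp only [mem_filter, mem_univ, true_and, mem_Ico]
    refine ⟨fun hj => ⟨symm_zero_le_of_apply_lt_apply_zero h321 (hj.trans hk0), ?_⟩,
      fun hj => apply_lt_apply_of_symm_zero_le h132 hj.1 hj.2⟩
    by_contra! hkj
    rcases hkj.eq_or_lt with rfl | hkj
    · exact hj.false
    · exact (apply_lt_apply_of_symm_zero_le h132 hk hkj).not_gt hj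
  rw [← card_filter_apply_lt π (π k), hset, Fin.card_Ico]

theorem apply_eq_self_of_symm_zero_le_of_apply_zero_le (h132 : PermAvoids π p132)
    (hk : π⁻¹ 0 ≤ k) (hk0 : π 0 ≤ π k) : π k = k := by
  have hset : ({j | π j < π k} : Finset (Fin n)) = Iio k := by
    ext j
    simp only [mem_filter, mem_univ, true_and, mem_Iio]
    refine ⟨fun hj => ?_, fun hjk => ?_⟩
    · by_contra! hkj
      rcases hkj.eq_or_lt with rfl | hkj
      · exact hj.false
      · exact (apply_lt_apply_of_symm_zero_le h132 hk hkj).not_gt hj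
    · rcases lt_or_ge j (π⁻¹ 0) with hja | hja
      · exact apply_lt_apply_of_lt_symm_zero_le h132 hja hk hk0
      · exact apply_lt_apply_of_symm_zero_le h132 hja hjk
  exact Fin.ext <| by rw [← card_filter_apply_lt π (π k), hset, Fin.card_Iio]

theorem symm_zero_add_apply_zero_le (h321 : PermAvoids π p321) : (π⁻¹ 0 : ℕ) + π 0 ≤ n := by
  have hsub : ({j | π j < π 0} : Finset (Fin n)) ⊆ Ici (π⁻¹ 0) := fun j hj =>
    mem_Ici.mpr (symm_zero_le_of_apply_lt_apply_zero h321 (mem_filter.mp hj).2)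
  have := (card_le_card hsub).trans_eq (Fin.card_Ici _)
  rw [card_filter_apply_lt] at this
  omega

theorem val_apply_eq_blockSwapFun (h132 : PermAvoids π p132) (h321 : PermAvoids π p321)
    (k : Fin n) : (π k : ℕ) = blockSwapFun (π⁻¹ 0) (π 0) k := by
  rw [blockSwapFun]
  rcases lt_or_ge k (π⁻¹ 0) with hka | hka
  · rw [if_pos (Fin.lt_def.mp hka), val_apply_of_lt_symm_zero h132 h321 hka]
  rw [if_neg (not_lt.mpr (Fin.le_def.mp hka))]
  rcases lt_or_ge (π k) (π 0) with hk0 | hk0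
  · have := val_apply_of_symm_zero_le_of_apply_lt h132 h321 hka hk0
    rw [Fin.lt_def] at hk0
    rw [if_pos (by omega), this]
  · have hkk := apply_eq_self_of_symm_zero_le_of_apply_zero_le h132 hka hk0
    rw [if_neg, hkk]
    intro hkab
    -- otherwise the value `k` would also be taken at the position `k - π 0` of the first block
    have hka' := Fin.le_def.mp hka
    have hbk : (π 0 : ℕ) ≤ k := by simpa [hkk] using Fin.le_def.mp hk0
    let j : Fin n := ⟨k - π 0, by omega⟩
    have hja : j < π⁻¹ 0 := Fin.lt_def.mpr (by simp only [j]; omega)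
    have hjk : j = k := π.injective <| Fin.ext <| by
      rw [val_apply_of_lt_symm_zero h132 h321 hja, hkk]
      simp only [j]
      omega
    have := congrArg Fin.val hjk
    simp only [j] at this
    omega

end Classification

theorem exists_eq_blockSwap {n : ℕ} {π : Perm (Fin n)} (h132 : PermAvoids π p132)
    (h321 : PermAvoids π p321) :
    ∃ a b, ∃ h : a + b ≤ n, (a = 0 ↔ b = 0) ∧ π = blockSwap n a b h := by
  rcases n.eq_zero_or_pos with rfl | hn
  · exact ⟨0, 0, le_rfl, Iff.rfl, Subsingleton.elim _ _⟩
  have : NeZero n := ⟨hn.ne'⟩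
  refine ⟨π⁻¹ 0, π 0, symm_zero_add_apply_zero_le h321, ?_, ?_⟩
  · rw [Fin.val_eq_zero_iff, Fin.val_eq_zero_iff, Perm.inv_eq_iff_eq, eq_comm]
  · ext k
    exact val_apply_eq_blockSwapFun h132 h321 k

theorem card_avoiders_132_321_fp_exc (n i j : ℕ) :
    Nat.card {π : Perm (Fin n) // (∀ σ ∈ ({p132, p321} : Set (Perm (Fin 3))), PermAvoids π σ) ∧
      fpCount π = i ∧ excCount π = j} = if i + j ≤ n ∧ (j = 0 ↔ i + j = n) then 1 else 0 := by
  simp only [Set.mem_insert_iff, Set.mem_singleton_iff, forall_eq_or_imp, forall_eq]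
  split_ifs with hij
  · refine Nat.card_eq_one_iff_unique.mpr ⟨⟨?_⟩, ⟨?_⟩⟩
    · rintro ⟨π, ⟨h132, h321⟩, rfl, rfl⟩ ⟨π', ⟨h132', h321'⟩, hfp, hexc⟩
      obtain ⟨a, b, h, hab, rfl⟩ := exists_eq_blockSwap h132 h321
      obtain ⟨a', b', h', hab', rfl⟩ := exists_eq_blockSwap h132' h321'
      rw [fpCount_blockSwap _ hab, fpCount_blockSwap _ hab'] at hfp
      rw [excCount_blockSwap _ (by omega), excCount_blockSwap _ (by omega)] at hexc
      obtain rfl : a' = a := hexc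
      obtain rfl : b' = b := by omega
      rfl
    · have h : j + (n - i - j) ≤ n := by omega
      exact ⟨blockSwap n j (n - i - j) h, ⟨blockSwap_avoids_p132 h, blockSwap_avoids_p321 h⟩,
        by rw [fpCount_blockSwap h (by omega)]; omega, excCount_blockSwap h (by omega)⟩
  · refine Nat.card_eq_zero.mpr (Or.inl ⟨?_⟩)
    rintro ⟨π, ⟨h132, h321⟩, rfl, rfl⟩
    obtain ⟨a, b, h, hab, rfl⟩ := exists_eq_blockSwap h132 h321
    rw [fpCount_blockSwap _ hab, excCount_blockSwap _ (by omega)] at hij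
    omega

section GeneratingFunction

open Finsupp

theorem MvPowerSeries.coeff_one_sub_monomial_mul {σ R : Type*} [CommRing R] (e d : σ →₀ ℕ)
    (f : MvPowerSeries σ R) :
    coeff d ((1 - monomial e 1) * f) = coeff d f - if e ≤ d then coeff (d - e) f else 0 := by
  rw [sub_mul, one_mul, map_sub, coeff_monomial_mul, one_mul]

theorem le_iff_of_fin_three (e d : Fin 3 →₀ ℕ) : e ≤ d ↔ e 0 ≤ d 0 ∧ e 1 ≤ d 1 ∧ e 2 ≤ d 2 := by
  simp [Finsupp.le_def, Fin.forall_fin_succ]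

theorem eq_zero_iff_of_fin_three (d : Fin 3 →₀ ℕ) : d = 0 ↔ d 0 = 0 ∧ d 1 = 0 ∧ d 2 = 0 := by
  simp [Finsupp.ext_iff, Fin.forall_fin_succ]

theorem vz_eq_monomial : vz = monomial (single 2 1) 1 := X_def 2

theorem vx_mul_vz_eq_monomial : vx * vz = monomial (single 0 1 + single 2 1) 1 := by
  rw [vx, vz, X_def, X_def, monomial_mul_monomial, one_mul]

theorem vq_mul_vz_eq_monomial : vq * vz = monomial (single 1 1 + single 2 1) 1 := by
  rw [vq, vz, X_def, X_def, monomial_mul_monomial, one_mul]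

theorem vq_mul_vz_sq_eq_monomial : vq * vz ^ 2 = monomial (single 1 1 + single 2 2) 1 := by
  rw [vq, vz, X_def, X_pow_eq, monomial_mul_monomial, one_mul]

/-- `Σ (xz)^k`; below, `geomZ_XZ_QZ = Σ z^a (xz)^b (qz)^c` and so on. -/
noncomputable def geomXZ : MvPowerSeries (Fin 3) ℤ := fun d => if d 0 = d 2 ∧ d 1 = 0 then 1 else 0

noncomputable def geomZ : MvPowerSeries (Fin 3) ℤ := fun d => if d 0 = 0 ∧ d 1 = 0 then 1 else 0

noncomputable def geomZ_XZ : MvPowerSeries (Fin 3) ℤ :=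
  fun d => if d 1 = 0 ∧ d 0 ≤ d 2 then 1 else 0

noncomputable def geomZ_XZ_QZ : MvPowerSeries (Fin 3) ℤ := fun d => if d 0 + d 1 ≤ d 2 then 1 else 0

theorem one_sub_vx_mul_vz_mul_geomXZ : (1 - vx * vz) * geomXZ = 1 := by
  ext d
  rw [vx_mul_vz_eq_monomial, coeff_one_sub_monomial_mul, coeff_one]
  simp only [coeff_apply, geomXZ, le_iff_of_fin_three, eq_zero_iff_of_fin_three, Finsupp.tsub_apply,
    Finsupp.add_apply, Finsupp.single_apply, Fin.reduceEq, reduceIte, add_zero, zero_add]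
  split_ifs <;> omega

theorem one_sub_vq_mul_vz_mul_geomZ_XZ_QZ : (1 - vq * vz) * geomZ_XZ_QZ = geomZ_XZ := by
  ext d
  rw [vq_mul_vz_eq_monomial, coeff_one_sub_monomial_mul]
  simp only [coeff_apply, geomZ_XZ_QZ, geomZ_XZ, le_iff_of_fin_three, Finsupp.tsub_apply,
    Finsupp.add_apply, Finsupp.single_apply, Fin.reduceEq, reduceIte, add_zero, zero_add]
  split_ifs <;> omega

theorem one_sub_vx_mul_vz_mul_geomZ_XZ : (1 - vx * vz) * geomZ_XZ = geomZ := by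
  ext d
  rw [vx_mul_vz_eq_monomial, coeff_one_sub_monomial_mul]
  simp only [coeff_apply, geomZ_XZ, geomZ, le_iff_of_fin_three, Finsupp.tsub_apply,
    Finsupp.add_apply, Finsupp.single_apply, Fin.reduceEq, reduceIte, add_zero, zero_add]
  split_ifs <;> omega

theorem one_sub_vz_mul_geomZ : (1 - vz) * geomZ = 1 := by
  ext d
  rw [vz_eq_monomial, coeff_one_sub_monomial_mul, coeff_one]
  simp only [coeff_apply, geomZ, le_iff_of_fin_three, eq_zero_iff_of_fin_three, Finsupp.tsub_apply,
    Finsupp.single_apply, Fin.reduceEq, reduceIte]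
  split_ifs <;> omega

theorem patternGF_132_321_eq : patternGF {p132, p321} = geomXZ + vq * vz ^ 2 * geomZ_XZ_QZ := by
  ext d
  rw [map_add, vq_mul_vz_sq_eq_monomial, coeff_monomial_mul, one_mul, coeff_apply, patternGF,
    card_avoiders_132_321_fp_exc]
  simp only [coeff_apply, geomXZ, geomZ_XZ_QZ, le_iff_of_fin_three, Finsupp.tsub_apply,
    Finsupp.add_apply, Finsupp.single_apply, Fin.reduceEq, reduceIte, add_zero, zero_add]
  split_ifs <;> omega

end GeneratingFunction

/-- F_{{132,321}} = F_{{213,321}}, and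
(1−z)(1−xz)(1−qz)·F_{{132,321}} = 1 − (1+q)z + 2qz². -/
theorem F132_321_identity :
    patternGF {p132, p321} = patternGF {p213, p321} ∧
    (1 - vz) * (1 - vx * vz) * (1 - vq * vz) * patternGF {p132, p321} =
      1 - (1 + vq) * vz + 2 * vq * vz ^ 2 := by
  refine ⟨patternGF_132_321_eq_213_321, ?_⟩
  rw [patternGF_132_321_eq]
  linear_combination (1 - vz) * (1 - vq * vz) * one_sub_vx_mul_vz_mul_geomXZ +
    vq * vz ^ 2 * (1 - vz) * (1 - vx * vz) * one_sub_vq_mul_vz_mul_geomZ_XZ_QZ +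
    vq * vz ^ 2 * (1 - vz) * one_sub_vx_mul_vz_mul_geomZ_XZ + vq * vz ^ 2 * one_sub_vz_mul_geomZ
end
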